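/- Let w_long be the n×n antidiagonal permutation matrix (1's on the antidiagonal), and for z ∈ ℝ^{n-1} let u(z) be the matrix with 1's on the diagonal, first row (1, z_{n-1}, …, z_1), and zeros elsewhere. If z_1 ≠ 0, then w_long · u(z) = u' · q, where u' is the unipotent matrix with 1's on the diagonal and first row (1, −z_2/z_1, −z_3/z_1, …, −z_{n-1}/z_1, 1/z_1), and q is a matrix whose first row is (−1/z_1, 0, …, 0) and whose last row is (1, z_{n-1}, z_{n-2}, …, z_1); in particular q has last column (0, 0, …, 0, z_1)ᵗ modulo the mirabolic subgroup, and det q = ± det(w_long). -/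

import Mathlib

/-!
Both `u(z)` and `u'` are of the form `1 + e₀ aᵀ` with `a₀ = 0`. Such matrices have determinant
one and multiply by adding their row vectors, so `u'⁻¹ = 1 - e₀ bᵀ` and `q := u'⁻¹ w u`
automatically gives `w u = u' q` with `det q = det w`. Since `w` is the permutation matrix
of `j ↦ n - 1 - j`, row `n - 1` of `q` is row `0` of `u`, and row `0` of `q` is
`e_{n-1} - b ∘ rev - b_{n-1} a`, which collapses to `-e₀ / z₁`.
-/

open Matrix

namespace Matrix

variable {ι R : Type*} [DecidableEq ι] [CommRing R] {i₀ : ι} {a : ι → R}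

def rowUnipotent (i₀ : ι) (a : ι → R) : Matrix ι ι R := 1 + vecMulVec (Pi.single i₀ 1) a

@[simp]
theorem rowUnipotent_zero (i₀ : ι) : rowUnipotent i₀ (0 : ι → R) = 1 := by
  simp [rowUnipotent]

theorem rowUnipotent_apply_of_ne {i : ι} (hi : i ≠ i₀) :
    rowUnipotent i₀ a i = Pi.single i 1 := by
  ext j
  simp [rowUnipotent, vecMulVec_apply, hi, one_apply, Pi.single_apply, eq_comm]

theorem eq_rowUnipotent {M : Matrix ι ι R} (hdiag : ∀ i, M i i = 1)
    (hoff : ∀ i j, i ≠ i₀ → i ≠ j → M i j = 0) :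
    M = rowUnipotent i₀ (M i₀ - Pi.single i₀ 1) := by
  ext i j
  by_cases hij : i = j
  · subst hij
    by_cases hi : i = i₀ <;> simp [rowUnipotent, vecMulVec_apply, hdiag, hi]
  · by_cases hi : i = i₀
    · subst hi
      simp [rowUnipotent, vecMulVec_apply, hij, Ne.symm hij]
    · simp [rowUnipotent, vecMulVec_apply, hij, hi, hoff i j hi hij]

variable [Fintype ι]

theorem rowUnipotent_mul_apply_of_ne (M : Matrix ι ι R) {i : ι} (hi : i ≠ i₀) :
    (rowUnipotent i₀ a * M) i = M i := by
  ext j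
  simp [rowUnipotent, add_mul, vecMulVec_mul, vecMulVec_apply, hi]

theorem rowUnipotent_mul_apply_self (M : Matrix ι ι R) :
    (rowUnipotent i₀ a * M) i₀ = M i₀ + a ᵥ* M := by
  ext j
  simp [rowUnipotent, add_mul, vecMulVec_mul, vecMulVec_apply]

theorem vecMul_rowUnipotent (c : ι → R) : c ᵥ* rowUnipotent i₀ a = c + c i₀ • a := by
  simp [rowUnipotent, vecMul_add, vecMul_vecMulVec]

theorem rowUnipotent_mul_rowUnipotent (ha : a i₀ = 0) (b : ι → R) :
    rowUnipotent i₀ a * rowUnipotent i₀ b = rowUnipotent i₀ (a + b) := by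
  simp [rowUnipotent, add_mul, mul_add, vecMulVec_mul_vecMulVec, ha, add_assoc, vecMulVec_add]

theorem det_rowUnipotent (ha : a i₀ = 0) : (rowUnipotent i₀ a).det = 1 := by
  rw [rowUnipotent, vecMulVec_eq Unit, det_one_add_replicateCol_mul_replicateRow]
  simp [ha]

theorem rowUnipotent_mul_toMatrix_mul_rowUnipotent_apply_self (σ : Equiv.Perm ι)
    (hσ : σ i₀ ≠ i₀) (b : ι → R) :
    (rowUnipotent i₀ b * ((σ.toPEquiv.toMatrix : Matrix ι ι R) * rowUnipotent i₀ a)) i₀ =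
      Pi.single (σ i₀) 1 + b ∘ σ.symm + b (σ.symm i₀) • a := by
  rw [rowUnipotent_mul_apply_self, ← vecMul_vecMul, PEquiv.vecMul_toMatrix_toPEquiv,
    vecMul_rowUnipotent, PEquiv.toMatrix_toPEquiv_mul, add_assoc]
  congr 1
  exact rowUnipotent_apply_of_ne hσ

theorem antidiagonal_eq_toMatrix_revPerm (n : ℕ) :
    (of fun i j : Fin n => if (i : ℕ) + j = n - 1 then (1 : R) else 0) =
      (Fin.revPerm : Equiv.Perm (Fin n)).toPEquiv.toMatrix := by
  ext i j
  simp only [of_apply, PEquiv.toMatrix_apply, Equiv.toPEquiv_apply, Option.mem_some_iff,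
    Fin.ext_iff, Fin.revPerm_apply, Fin.val_rev]
  congr 1
  grind

end Matrix

/-- Explicit big-cell Bruhat decomposition of `w_long · u(z)` relative to the mirabolic
parabolic: if `z₁ ≠ 0` then `w_long · u(z) = u' · q`, where `u'` is unipotent with first row
`(1, −z₂/z₁, …, −z_{n-1}/z₁, 1/z₁)`, and `q` has first row `(−1/z₁, 0, …, 0)`, last row
`(1, z_{n-1}, …, z₁)`, and `det q = ± det w_long`. -/
theorem wlong_bruhat_decomposition (n : ℕ) (hn : 2 ≤ n) (z : ℕ → ℝ) (hz : z 1 ≠ 0) :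
    let w : Matrix (Fin n) (Fin n) ℝ :=
      Matrix.of fun i j => if (i : ℕ) + (j : ℕ) = n - 1 then 1 else 0
    let u : Matrix (Fin n) (Fin n) ℝ :=
      Matrix.of fun i j =>
        if i = j then 1 else if (i : ℕ) = 0 then z (n - (j : ℕ)) else 0
    let u' : Matrix (Fin n) (Fin n) ℝ :=
      Matrix.of fun i j =>
        if i = j then 1
        else if (i : ℕ) = 0 then
          (if (j : ℕ) = n - 1 then 1 / z 1 else -z ((j : ℕ) + 1) / z 1)
        else 0
    ∃ q : Matrix (Fin n) (Fin n) ℝ,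
      (∀ j : Fin n, q ⟨0, by omega⟩ j = if (j : ℕ) = 0 then -1 / z 1 else 0) ∧
      (∀ j : Fin n, q ⟨n - 1, by omega⟩ j = if (j : ℕ) = 0 then 1 else z (n - (j : ℕ))) ∧
      (q.det = w.det ∨ q.det = -w.det) ∧
      w * u = u' * q := by
  intro w u u'
  obtain ⟨m, rfl⟩ : ∃ m, n = m + 2 := ⟨n - 2, by omega⟩
  have hw : w = (Fin.revPerm : Equiv.Perm (Fin (m + 2))).toPEquiv.toMatrix :=
    antidiagonal_eq_toMatrix_revPerm _
  have hu : u = rowUnipotent 0 (u 0 - Pi.single 0 1) :=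
    eq_rowUnipotent (by simp [u]) fun i j hi hij => by simp [u, hij, hi]
  have hu' : u' = rowUnipotent 0 (u' 0 - Pi.single 0 1) :=
    eq_rowUnipotent (by simp [u']) fun i j hi hij => by simp [u', hij, hi]
  set a := u 0 - Pi.single 0 1
  set b := u' 0 - Pi.single 0 1
  have hb : b 0 = 0 := by simp [b, u']
  refine ⟨rowUnipotent 0 (-b) * (w * u), fun j => ?_, fun j => ?_, Or.inl ?_, ?_⟩
  · rw [Fin.zero_eta, hw, hu, rowUnipotent_mul_toMatrix_mul_rowUnipotent_apply_self _
      (by simp [Fin.ext_iff])]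
    simp only [Pi.add_apply, Function.comp_apply, Pi.neg_apply, Pi.smul_apply, smul_eq_mul,
      Fin.revPerm_symm, Fin.revPerm_apply, a, b, Pi.sub_apply, Pi.single_apply, u, u', of_apply,
      Fin.ext_iff, Fin.val_rev, Fin.val_zero]
    obtain ⟨k, hk⟩ := j
    obtain rfl | rfl | ⟨hk0, hkm⟩ : k = 0 ∨ k = m + 1 ∨ (0 < k ∧ k < m + 1) := by omega
    · simp [neg_div]
    · simp [hz]
    · have hk1 : m + 1 - k + 1 = m + 2 - k := by omega
      simp [hk0.ne, hk0.ne', hkm.ne, hk1, show 0 ≠ m + 1 - k by omega,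
        show m + 1 - k ≠ 0 by omega, show m + 1 - k ≠ m + 1 by omega]
      ring
  · rw [show (⟨m + 2 - 1, _⟩ : Fin (m + 2)) = Fin.last (m + 1) from Fin.ext (by simp),
      rowUnipotent_mul_apply_of_ne _ Fin.last_pos.ne', hw, PEquiv.toMatrix_toPEquiv_mul]
    simp [u, eq_comm]
  · rw [det_mul, det_rowUnipotent (by simp [hb]), one_mul, det_mul, hu,
      det_rowUnipotent (by simp [a, u]), mul_one]
  · rw [← Matrix.mul_assoc, hu', rowUnipotent_mul_rowUnipotent hb, add_neg_cancel,
      rowUnipotent_zero, Matrix.one_mul]
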